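/- arXiv:1812.10465 — 2 statements merged into one kernel-verified Lean document; each statement's English description precedes it below -/
import Mathlib

section
/- Let m, n, k ≥ 2 be integers and let φ be an edge coloring of K_n using exactly two colors from [k], in which each of the two colors appears on more than 3mn edges. Then w(φ,k) ≤ 2^n + k·n·2^{n − 0.4m}, where 2^{n−0.4m} denotes the real power of 2 with exponent n − 0.4m. -/
/-- The edge set of the complete graph `K_n` on the labeled vertex set `Fin n`:
unordered pairs of distinct vertices. -/
abbrev Edge (n : ℕ) := {e : Sym2 (Fin n) // ¬ e.IsDiag}

/-- The edge joining two distinct vertices. -/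
def edgeOf {n : ℕ} (a b : Fin n) (h : a ≠ b) : Edge n :=
  ⟨s(a, b), fun hd => h (Sym2.mk_isDiag_iff.mp hd)⟩

/-- A Gallai coloring: an edge coloring of `K_n` with no rainbow triangle, i.e. no
triangle whose three edges receive pairwise distinct colors. -/
def IsGallai {n k : ℕ} (φ : Edge n → Fin k) : Prop :=
  ∀ a b c : Fin n, ∀ (hab : a ≠ b) (hbc : b ≠ c) (hac : a ≠ c),
    φ (edgeOf a b hab) = φ (edgeOf b c hbc) ∨
    φ (edgeOf b c hbc) = φ (edgeOf a c hac) ∨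
    φ (edgeOf a b hab) = φ (edgeOf a c hac)

/-- `c(n,k)`: the number of Gallai `k`-colorings of `K_n` (colorings as functions on
the edge set, with colors in a set of `k` colors, not all of which need be used). -/
noncomputable def gallaiCount (n k : ℕ) : ℕ :=
  Nat.card {φ : Edge n → Fin k // IsGallai φ}

/-- `φ'` is an extension of `φ` to `K_{n+1}`, where the new vertex is `Fin.last n` and
the old vertices are embedded via `Fin.castSucc`. -/
def Extends {n k : ℕ} (φ : Edge n → Fin k) (φ' : Edge (n + 1) → Fin k) : Prop :=
  ∀ a b : Fin n, ∀ h : a ≠ b,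
    φ' (edgeOf a.castSucc b.castSucc (fun he => h (Fin.castSucc_injective n he))) =
      φ (edgeOf a b h)

/-- `w(φ,k)`: the number of ways to color the `n` edges joining a new vertex to the
vertices of `K_n` with colors from the `k` colors so that the resulting coloring of
`K_{n+1}` is Gallai; equivalently, the number of Gallai colorings of `K_{n+1}`
extending `φ`. -/
noncomputable def extCount {n k : ℕ} (φ : Edge n → Fin k) : ℕ :=
  Nat.card {φ' : Edge (n + 1) → Fin k // IsGallai φ' ∧ Extends φ φ'}

/-- Membership in `F(n,k)`: there exist a color `c` and a partition of the vertex set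
into parts, each part assigned a distinct color from `[k] \ {c}` (the parts are the
fibers of `p`), such that every edge joining two different parts has color `c` and
every edge inside the part assigned color `i` has color `i` or color `c`. -/
def InF {n k : ℕ} (φ : Edge n → Fin k) : Prop :=
  ∃ c : Fin k, ∃ p : Fin n → Fin k, (∀ v, p v ≠ c) ∧
    ∀ a b : Fin n, ∀ h : a ≠ b,
      (p a ≠ p b → φ (edgeOf a b h) = c) ∧
      (p a = p b → φ (edgeOf a b h) = p a ∨ φ (edgeOf a b h) = c)

/-- The restriction of `φ` to the edges inside the vertex set `S` belongs to
`F(|S|, k)`. -/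
def InFOn {n k : ℕ} (φ : Edge n → Fin k) (S : Finset (Fin n)) : Prop :=
  ∃ c : Fin k, ∃ p : {v : Fin n // v ∈ S} → Fin k, (∀ v, p v ≠ c) ∧
    ∀ a b : {v : Fin n // v ∈ S}, ∀ h : (a : Fin n) ≠ (b : Fin n),
      (p a ≠ p b → φ (edgeOf a b h) = c) ∧
      (p a = p b → φ (edgeOf a b h) = p a ∨ φ (edgeOf a b h) = c)



open Finset
open scoped Classical

namespace GallaiAux

lemma edgeOf_symm {n : ℕ} (a b : Fin n) (h : a ≠ b) : edgeOf a b h = edgeOf b a h.symm :=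
  Subtype.ext (Sym2.eq_swap)

def col {n k : ℕ} (φ : Edge n → Fin k) (a b : Fin n) : Option (Fin k) :=
  if h : a = b then none else some (φ (edgeOf a b h))

lemma col_spec {n k : ℕ} (φ : Edge n → Fin k) {a b : Fin n} (h : a ≠ b) :
    col φ a b = some (φ (edgeOf a b h)) := dif_neg h

lemma col_self {n k : ℕ} (φ : Edge n → Fin k) (a : Fin n) : col φ a a = none := dif_pos rfl

lemma col_ne_iff {n k : ℕ} {φ : Edge n → Fin k} {a b : Fin n} {i : Fin k}
    (h : col φ a b = some i) : a ≠ b := by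
  rintro rfl; rw [col_self] at h; cases h

lemma edge_repr {n : ℕ} (e : Edge n) : ∃ u v : Fin n, u ≠ v ∧ e.1 = s(u, v) := by
  obtain ⟨q, hd⟩ := e
  induction q using Sym2.inductionOn with
  | hf u v =>
    exact ⟨u, v, fun h => hd (by rw [h]; exact Sym2.mk_isDiag_iff.mpr rfl), rfl⟩

def Nbr {n k : ℕ} (φ : Edge n → Fin k) (i : Fin k) (b : Fin n) : Finset (Fin n) :=
  univ.filter (fun a => col φ a b = some i)

def inc {n k : ℕ} (φ : Edge n → Fin k) (i : Fin k) (b : Fin n) : Finset (Edge n) :=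
  univ.filter (fun e => φ e = i ∧ b ∈ e.1)

lemma not_mem_nbr_self {n k : ℕ} (φ : Edge n → Fin k) (i : Fin k) (b : Fin n) :
    b ∉ Nbr φ i b := by
  simp [Nbr, col_self]

lemma inc_card_le {n k : ℕ} (φ : Edge n → Fin k) (i : Fin k) (b : Fin n) :
    (inc φ i b).card ≤ (Nbr φ i b).card := by
  apply card_le_card_of_injOn (fun e => if h : b ∈ e.1 then Sym2.Mem.other' h else b)
  · intro e he
    simp only [mem_coe] at he ⊢
    simp only [inc, mem_filter, mem_univ, true_and] at he
    obtain ⟨hc, hb⟩ := he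
    rw [dif_pos hb]
    have hsp := Sym2.other_spec' hb
    have hne : Sym2.Mem.other' hb ≠ b := by
      intro hEq
      apply e.2
      rw [← hsp, hEq]
      exact Sym2.mk_isDiag_iff.mpr rfl
    have hedge : edgeOf (Sym2.Mem.other' hb) b hne = e := by
      apply Subtype.ext
      show s(Sym2.Mem.other' hb, b) = e.1
      rw [Sym2.eq_swap]; exact hsp
    simp only [Nbr, mem_filter, mem_univ, true_and]
    rw [col_spec φ hne, hedge, hc]
  · intro e1 h1 e2 h2 heq
    simp only [mem_coe, inc, mem_filter, mem_univ, true_and] at h1 h2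
    dsimp only at heq
    rw [dif_pos h1.2, dif_pos h2.2] at heq
    apply Subtype.ext
    rw [← Sym2.other_spec' h1.2, ← Sym2.other_spec' h2.2, heq]

lemma card_avoiders {n : ℕ} (U : Finset (Fin n)) :
    ((univ : Finset (Finset (Fin n))).filter (fun S => ∀ a ∈ U, a ∉ S)).card ≤
      2 ^ (n - U.card) := by
  have hsub : (univ : Finset (Finset (Fin n))).filter (fun S => ∀ a ∈ U, a ∉ S) ⊆
      Uᶜ.powerset := by
    intro S hS
    simp only [mem_filter, mem_univ, true_and] at hS
    rw [mem_powerset]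
    intro a ha
    rw [mem_compl]
    intro haU
    exact hS a haU ha
  calc _ ≤ (Uᶜ.powerset).card := card_le_card hsub
    _ = 2 ^ (Uᶜ.card) := card_powerset _
    _ = 2 ^ (n - U.card) := by rw [card_compl, Fintype.card_fin]

lemma card_supersets {n : ℕ} (T : Finset (Fin n)) :
    ((univ : Finset (Finset (Fin n))).filter (fun S => T ⊆ S)).card ≤ 2 ^ (n - T.card) := by
  have h1 : ((univ : Finset (Finset (Fin n))).filter (fun S => T ⊆ S)).card ≤
      (Tᶜ.powerset).card := by
    apply card_le_card_of_injOn (fun S => S \ T)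
    · intro S hS
      simp only [mem_coe] at hS ⊢
      rw [mem_powerset]
      intro a ha
      rw [mem_sdiff] at ha
      rw [mem_compl]
      exact ha.2
    · intro S1 h1 S2 h2 heq
      simp only [mem_coe, mem_filter, mem_univ, true_and] at h1 h2
      dsimp only at heq
      rw [← sdiff_union_of_subset h1, ← sdiff_union_of_subset h2, heq]
  calc _ ≤ (Tᶜ.powerset).card := h1
    _ = 2 ^ (Tᶜ.card) := card_powerset _
    _ = 2 ^ (n - T.card) := by rw [card_compl, Fintype.card_fin]

lemma card_inside {n : ℕ} (C : Finset (Fin n)) :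
    ((univ : Finset (Edge n)).filter (fun e => ∀ v ∈ e.1, v ∈ C)).card ≤
      C.card * C.card := by
  have h1 : ((univ : Finset (Edge n)).filter (fun e => ∀ v ∈ e.1, v ∈ C)).card ≤
      (C.powersetCard 2).card := by
    apply card_le_card_of_injOn (fun e => univ.filter (· ∈ e.1))
    · intro e he
      simp only [mem_coe] at he ⊢
      simp only [mem_filter, mem_univ, true_and] at he
      rw [mem_powersetCard]
      constructor
      · intro v hv
        simp only [mem_filter, mem_univ, true_and] at hv
        exact he v hv
      · obtain ⟨u, v, huv, hrep⟩ := edge_repr e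
        have : univ.filter (· ∈ e.1) = {u, v} := by
          ext w
          simp [hrep, Sym2.mem_iff]
        rw [this, card_pair huv]
    · intro e1 h1 e2 h2 heq
      dsimp only at heq
      obtain ⟨u, v, huv, hrep⟩ := edge_repr e1
      have hu : u ∈ univ.filter (· ∈ e2.1) := by
        rw [← heq]; simp [hrep]
      have hv : v ∈ univ.filter (· ∈ e2.1) := by
        rw [← heq]; simp [hrep]
      simp only [mem_filter, mem_univ, true_and] at hu hv
      apply Subtype.ext
      rw [hrep, ← (Sym2.mem_and_mem_iff huv).mp ⟨hu, hv⟩]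
  calc _ ≤ (C.powersetCard 2).card := h1
    _ = C.card.choose 2 := card_powersetCard 2 C
    _ = C.card * (C.card - 1) / 2 := Nat.choose_two_right _
    _ ≤ C.card * (C.card - 1) := Nat.div_le_self _ _
    _ ≤ C.card * C.card := Nat.mul_le_mul_left _ (Nat.sub_le _ _)

lemma card_cross {n : ℕ} (e0 : Edge n) {P Q : Finset (Fin n)} (hdis : Disjoint P Q) :
    P.card * Q.card ≤
      ((univ : Finset (Edge n)).filter
        (fun e => (∃ v ∈ e.1, v ∈ P) ∧ (∃ v ∈ e.1, v ∈ Q))).card := by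
  rw [← card_product]
  apply card_le_card_of_injOn (fun pr => if h : pr.1 = pr.2 then e0 else edgeOf pr.1 pr.2 h)
  · rintro ⟨a, b⟩ hab
    simp only [mem_coe] at hab ⊢
    rw [mem_product] at hab
    have hne : a ≠ b := by
      rintro rfl
      exact (disjoint_left.mp hdis hab.1) hab.2
    rw [dif_neg hne]
    simp only [mem_filter, mem_univ, true_and]
    exact ⟨⟨a, Sym2.mem_mk_left a b, hab.1⟩, ⟨b, Sym2.mem_mk_right a b, hab.2⟩⟩
  · rintro ⟨a, b⟩ h1 ⟨a', b'⟩ h2 heq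
    simp only [mem_coe, mem_product] at h1 h2
    have hne : a ≠ b := by rintro rfl; exact (disjoint_left.mp hdis h1.1) h1.2
    have hne' : a' ≠ b' := by rintro rfl; exact (disjoint_left.mp hdis h2.1) h2.2
    dsimp only at heq
    rw [dif_neg hne, dif_neg hne'] at heq
    have := congrArg Subtype.val heq
    simp only [edgeOf] at this
    rw [Sym2.eq_iff] at this
    rcases this with ⟨rfl, rfl⟩ | ⟨rfl, rfl⟩
    · rfl
    · exact absurd h2.2 (disjoint_left.mp hdis h1.1)

lemma card_colored_touch {n k : ℕ} (φ : Edge n → Fin k) (i : Fin k) (Q : Finset (Fin n))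
    (t : ℕ) (hdeg : ∀ b ∈ Q, (Nbr φ i b).card ≤ t) :
    ((univ : Finset (Edge n)).filter (fun e => φ e = i ∧ ∃ v ∈ e.1, v ∈ Q)).card ≤
      Q.card * t := by
  have hsub : (univ : Finset (Edge n)).filter (fun e => φ e = i ∧ ∃ v ∈ e.1, v ∈ Q) ⊆
      Q.biUnion (inc φ i) := by
    intro e he
    simp only [mem_filter, mem_univ, true_and] at he
    obtain ⟨hc, v, hv, hvQ⟩ := he
    exact mem_biUnion.mpr ⟨v, hvQ, by simp [inc, hc, hv]⟩
  calc _ ≤ (Q.biUnion (inc φ i)).card := card_le_card hsub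
    _ ≤ ∑ b ∈ Q, (inc φ i b).card := card_biUnion_le
    _ ≤ Q.card • t := sum_le_card_nsmul _ _ _
        (fun b hb => le_trans (inc_card_le φ i b) (hdeg b hb))
    _ = Q.card * t := by rw [smul_eq_mul]

lemma color_class_bound {n k : ℕ} (φ : Edge n → Fin k) (i : Fin k) (u : ℕ) :
    ((univ : Finset (Edge n)).filter (fun e => φ e = i)).card ≤
      n * u + ((univ : Finset (Fin n)).filter (fun b => u + 1 ≤ (Nbr φ i b).card)).card ^ 2 := by
  set R := (univ : Finset (Fin n)).filter (fun b => u + 1 ≤ (Nbr φ i b).card) with hR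
  have hsub : (univ : Finset (Edge n)).filter (fun e => φ e = i) ⊆
      ((univ : Finset (Edge n)).filter (fun e => φ e = i ∧ ∃ v ∈ e.1, v ∈ Rᶜ)) ∪
      ((univ : Finset (Edge n)).filter (fun e => ∀ v ∈ e.1, v ∈ R)) := by
    intro e he
    simp only [mem_filter, mem_univ, true_and] at he
    rw [mem_union]
    by_cases hcase : ∃ v ∈ e.1, v ∈ Rᶜ
    · left; simp only [mem_filter, mem_univ, true_and]; exact ⟨he, hcase⟩
    · right
      push_neg at hcase
      simp only [mem_filter, mem_univ, true_and]
      intro v hv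
      by_contra hvR
      exact (hcase v hv) (mem_compl.mpr hvR)
  have h1 : ((univ : Finset (Edge n)).filter (fun e => φ e = i ∧ ∃ v ∈ e.1, v ∈ Rᶜ)).card ≤
      n * u := by
    have := card_colored_touch φ i Rᶜ u (fun b hb => by
      rw [mem_compl, hR, mem_filter] at hb
      push_neg at hb
      have := hb (mem_univ b)
      omega)
    calc _ ≤ Rᶜ.card * u := this
      _ ≤ n * u := Nat.mul_le_mul_right _ (le_trans (card_le_card (subset_univ _)) (by simp))
  calc _ ≤ _ := card_le_card hsub
    _ ≤ _ + _ := card_union_le _ _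
    _ ≤ n * u + R.card * R.card := Nat.add_le_add h1 (card_inside R)
    _ = n * u + R.card ^ 2 := by ring

end GallaiAux

namespace GallaiAux

lemma key_degree {n k : ℕ} (φ : Edge n → Fin k) (x y : Fin k) (hxy : x ≠ y)
    (hr : ∀ e, φ e = x ∨ φ e = y) (m u : ℕ) (hm : 2 ≤ m) (h5u : 5 * u ≤ 2 * m)
    (hn : 12 * m + 2 ≤ n) (e0 : Edge n)
    (hEx : 3 * m * n < ((univ : Finset (Edge n)).filter (fun e => φ e = x)).card)
    (hEy : 3 * m * n < ((univ : Finset (Edge n)).filter (fun e => φ e = y)).card) :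
    u + 1 ≤ ((univ : Finset (Fin n)).filter
      (fun b => u + 1 ≤ (Nbr φ x b).card ∧ u + 1 ≤ (Nbr φ y b).card)).card := by
  by_contra hW
  push_neg at hW
  set Rx := (univ : Finset (Fin n)).filter (fun b => u + 1 ≤ (Nbr φ x b).card) with hRx
  set Ry := (univ : Finset (Fin n)).filter (fun b => u + 1 ≤ (Nbr φ y b).card) with hRy
  set Wc := (univ : Finset (Fin n)).filter
      (fun b => u + 1 ≤ (Nbr φ x b).card ∧ u + 1 ≤ (Nbr φ y b).card) with hWc
  have hWcu : Wc.card ≤ u := by omega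
  have hbig : ∀ i : Fin k, 3 * m * n <
      ((univ : Finset (Edge n)).filter (fun e => φ e = i)).card →
      2 * m + 3 ≤ ((univ : Finset (Fin n)).filter (fun b => u + 1 ≤ (Nbr φ i b).card)).card := by
    intro i hEi
    by_contra hcon
    push_neg at hcon
    have hbound := color_class_bound φ i u
    set r := ((univ : Finset (Fin n)).filter (fun b => u + 1 ≤ (Nbr φ i b).card)).card with hr'
    have h1 : 3 * m * n < n * u + r ^ 2 := lt_of_lt_of_le hEi hbound
    have h2 : r ≤ 2 * m + 2 := by omega
    have h3 : r ^ 2 ≤ (2 * m + 2) ^ 2 := Nat.pow_le_pow_left h2 2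
    have h4 : 5 * (n * u) ≤ n * (2 * m) := by
      calc 5 * (n * u) = n * (5 * u) := by ring
        _ ≤ n * (2 * m) := Nat.mul_le_mul_left n h5u
    have h5 : 13 * (m * n) < 5 * (2 * m + 2) ^ 2 := by nlinarith
    have h6 : 13 * (m * (12 * m + 2)) ≤ 13 * (m * n) :=
      Nat.mul_le_mul_left 13 (Nat.mul_le_mul_left m hn)
    nlinarith
  have hrx : 2 * m + 3 ≤ Rx.card := hbig x hEx
  have hry : 2 * m + 3 ≤ Ry.card := hbig y hEy
  have hinter : Rx ∩ Ry = Wc := by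
    ext b
    simp only [hRx, hRy, hWc, mem_inter, mem_filter, mem_univ, true_and]
  set P := Rx \ Ry with hP'
  set Q := Ry \ Rx with hQ'
  have hPcard : P.card + Wc.card = Rx.card := by
    rw [← hinter]; exact card_sdiff_add_card_inter Rx Ry
  have hQcard : Q.card + Wc.card = Ry.card := by
    rw [← hinter, inter_comm]; exact card_sdiff_add_card_inter Ry Rx
  have hP : 2 * (u + 1) ≤ P.card := by omega
  have hQ : 2 * (u + 1) ≤ Q.card := by omega
  have hdis : Disjoint P Q := by
    rw [disjoint_left]
    intro b hbP hbQ
    rw [hP', mem_sdiff] at hbP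
    rw [hQ', mem_sdiff] at hbQ
    exact hbQ.2 hbP.1
  have hcross := card_cross e0 hdis
  have hsub2 : ((univ : Finset (Edge n)).filter
        (fun e => (∃ v ∈ e.1, v ∈ P) ∧ (∃ v ∈ e.1, v ∈ Q))) ⊆
      ((univ : Finset (Edge n)).filter (fun e => φ e = x ∧ ∃ v ∈ e.1, v ∈ Q)) ∪
      ((univ : Finset (Edge n)).filter (fun e => φ e = y ∧ ∃ v ∈ e.1, v ∈ P)) := by
    intro e he
    simp only [mem_filter, mem_univ, true_and] at he
    rw [mem_union]
    simp only [mem_filter, mem_univ, true_and]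
    rcases hr e with hc | hc
    · left; exact ⟨hc, he.2⟩
    · right; exact ⟨hc, he.1⟩
  have hx1 : ((univ : Finset (Edge n)).filter
      (fun e => φ e = x ∧ ∃ v ∈ e.1, v ∈ Q)).card ≤ Q.card * u := by
    apply card_colored_touch φ x Q u
    intro b hb
    simp only [hQ', mem_sdiff, hRx, mem_filter, mem_univ, true_and, not_le] at hb
    omega
  have hy1 : ((univ : Finset (Edge n)).filter
      (fun e => φ e = y ∧ ∃ v ∈ e.1, v ∈ P)).card ≤ P.card * u := by
    apply card_colored_touch φ y P u
    intro b hb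
    simp only [hP', mem_sdiff, hRy, mem_filter, mem_univ, true_and, not_le] at hb
    omega
  have hmain : P.card * Q.card ≤ Q.card * u + P.card * u :=
    le_trans hcross (le_trans (card_le_card hsub2)
      (le_trans (card_union_le _ _) (Nat.add_le_add hx1 hy1)))
  have hkey : (2 * (u + 1)) * (P.card + Q.card) ≤ (2 * u) * (P.card + Q.card) := by
    have l1 : (2 * (u + 1)) * Q.card ≤ P.card * Q.card := Nat.mul_le_mul_right _ hP
    have l2 : (2 * (u + 1)) * P.card ≤ Q.card * P.card := Nat.mul_le_mul_right _ hQ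
    calc (2 * (u + 1)) * (P.card + Q.card)
        = (2 * (u + 1)) * P.card + (2 * (u + 1)) * Q.card := by ring
      _ ≤ Q.card * P.card + P.card * Q.card := Nat.add_le_add l2 l1
      _ = 2 * (P.card * Q.card) := by ring
      _ ≤ 2 * (Q.card * u + P.card * u) := Nat.mul_le_mul_left _ hmain
      _ = (2 * u) * (P.card + Q.card) := by ring
  have hpos : 0 < P.card + Q.card := by omega
  have hfin := Nat.le_of_mul_le_mul_right hkey hpos
  omega

end GallaiAux

namespace GallaiAux

def ValidS {n k : ℕ} (φ : Edge n → Fin k) (S : Finset (Fin n)) : Prop :=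
  S.Nonempty ∧ ∀ a ∈ S, ∀ a' ∈ S, ∀ b ∉ S, col φ a b = col φ a' b

lemma valid_count {n k : ℕ} (φ : Edge n → Fin k) (x y : Fin k) (hxy : x ≠ y) (u : ℕ)
    (htn : u + 2 ≤ n)
    (hW : u + 1 ≤ ((univ : Finset (Fin n)).filter
      (fun b => u + 1 ≤ (Nbr φ x b).card ∧ u + 1 ≤ (Nbr φ y b).card)).card) :
    ((univ : Finset (Finset (Fin n))).filter (ValidS φ)).card ≤
      (n + 1) * 2 ^ (n - (u + 1)) := by
  set t := u + 1 with ht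
  set Wc := (univ : Finset (Fin n)).filter
      (fun b => t ≤ (Nbr φ x b).card ∧ t ≤ (Nbr φ y b).card) with hWc
  set B : Fin n → Fin k → Finset (Finset (Fin n)) := fun b j =>
    if t ≤ (Nbr φ j b).card then
      univ.filter (fun S => ∀ a ∈ insert b (Nbr φ j b), a ∉ S) else ∅ with hB
  have hsub : (univ : Finset (Finset (Fin n))).filter (ValidS φ) ⊆
      (univ.biUnion fun b => B b x ∪ B b y) ∪ univ.filter (fun S => Wc ⊆ S) := by
    intro S hS
    rw [mem_filter] at hS
    obtain ⟨-, ⟨a0, ha0⟩, hval⟩ := hS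
    rw [mem_union]
    by_cases hWS : Wc ⊆ S
    · right; rw [mem_filter]; exact ⟨mem_univ _, hWS⟩
    · left
      rw [Finset.not_subset] at hWS
      obtain ⟨b, hbW, hbS⟩ := hWS
      rw [hWc, mem_filter] at hbW
      obtain ⟨-, hdx, hdy⟩ := hbW
      have hne0 : a0 ≠ b := fun h => hbS (h ▸ ha0)
      have hcol : col φ a0 b = some (φ (edgeOf a0 b hne0)) := col_spec φ hne0
      set i := φ (edgeOf a0 b hne0) with hi
      have hj : ∃ j, (j = x ∨ j = y) ∧ j ≠ i := by
        by_cases hix : i = x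
        · exact ⟨y, Or.inr rfl, fun h => hxy.symm (h.trans hix)⟩
        · exact ⟨x, Or.inl rfl, fun h => hix h.symm⟩
      obtain ⟨j, hjxy, hji⟩ := hj
      rw [mem_biUnion]
      refine ⟨b, mem_univ b, ?_⟩
      have hdegj : t ≤ (Nbr φ j b).card := by
        rcases hjxy with rfl | rfl
        · exact hdx
        · exact hdy
      have hmem : S ∈ B b j := by
        rw [hB]
        dsimp only
        rw [if_pos hdegj, mem_filter]
        refine ⟨mem_univ S, ?_⟩
        intro a ha
        rw [mem_insert] at ha
        rcases ha with rfl | ha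
        · exact hbS
        · intro haS
          rw [Nbr, mem_filter] at ha
          have hv := hval a haS a0 ha0 b hbS
          rw [hcol, ha.2] at hv
          exact hji (Option.some_injective _ hv)
      rcases hjxy with rfl | rfl
      · exact mem_union_left _ hmem
      · exact mem_union_right _ hmem
  have hcard1 : ∀ b j, (B b j).card ≤ 2 ^ (n - (t + 1)) := by
    intro b j
    rw [hB]
    dsimp only
    split_ifs with hdeg
    · have hU : t + 1 ≤ (insert b (Nbr φ j b)).card := by
        rw [card_insert_of_notMem (not_mem_nbr_self φ j b)]
        omega
      calc _ ≤ 2 ^ (n - (insert b (Nbr φ j b)).card) := card_avoiders _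
        _ ≤ 2 ^ (n - (t + 1)) := Nat.pow_le_pow_right (by norm_num) (by omega)
    · simp
  calc ((univ : Finset (Finset (Fin n))).filter (ValidS φ)).card
      ≤ _ := card_le_card hsub
    _ ≤ (univ.biUnion fun b => B b x ∪ B b y).card +
        (univ.filter (fun S => Wc ⊆ S)).card := card_union_le _ _
    _ ≤ (∑ b : Fin n, (B b x ∪ B b y).card) + 2 ^ (n - t) := by
        apply Nat.add_le_add card_biUnion_le
        calc _ ≤ 2 ^ (n - Wc.card) := card_supersets Wc
          _ ≤ 2 ^ (n - t) := Nat.pow_le_pow_right (by norm_num) (by omega)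
    _ ≤ (∑ _b : Fin n, 2 ^ (n - t)) + 2 ^ (n - t) := by
        apply Nat.add_le_add_right
        apply Finset.sum_le_sum
        intro b _
        calc (B b x ∪ B b y).card ≤ (B b x).card + (B b y).card := card_union_le _ _
          _ ≤ 2 ^ (n - (t + 1)) + 2 ^ (n - (t + 1)) :=
              Nat.add_le_add (hcard1 b x) (hcard1 b y)
          _ = 2 ^ (n - t) := by
              have hnt : n - t = (n - (t + 1)) + 1 := by omega
              rw [hnt, pow_succ]
              ring
    _ = n * 2 ^ (n - t) + 2 ^ (n - t) := by
        rw [Finset.sum_const, card_univ, Fintype.card_fin, smul_eq_mul]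
    _ = (n + 1) * 2 ^ (n - t) := by ring

end GallaiAux

namespace GallaiAux

def Good {n k : ℕ} (φ : Edge n → Fin k) (ψ : Fin n → Fin k) : Prop :=
  ∀ a b : Fin n, ∀ i : Fin k, col φ a b = some i → ψ a = ψ b ∨ ψ b = i ∨ ψ a = i

lemma good_const {n k : ℕ} {φ : Edge n → Fin k} {ψ : Fin n → Fin k} {x y : Fin k}
    (hr : ∀ e, φ e = x ∨ φ e = y) (hg : Good φ ψ) {a a' : Fin n}
    (ha : ψ a ≠ x ∧ ψ a ≠ y) (ha' : ψ a' ≠ x ∧ ψ a' ≠ y) : ψ a = ψ a' := by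
  rcases eq_or_ne a a' with rfl | hne
  · rfl
  · have hcol := col_spec φ hne
    rcases hg a a' _ hcol with h | h | h
    · exact h
    · rcases hr (edgeOf a a' hne) with hc | hc
      · exact absurd (h.trans hc) ha'.1
      · exact absurd (h.trans hc) ha'.2
    · rcases hr (edgeOf a a' hne) with hc | hc
      · exact absurd (h.trans hc) ha.1
      · exact absurd (h.trans hc) ha.2

lemma good_off {n k : ℕ} {φ : Edge n → Fin k} {ψ : Fin n → Fin k} {x y : Fin k}
    (hr : ∀ e, φ e = x ∨ φ e = y) (hg : Good φ ψ) {a b : Fin n}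
    (ha : ψ a ≠ x ∧ ψ a ≠ y) (hb : ψ b = x ∨ ψ b = y) : col φ a b = some (ψ b) := by
  have hne : a ≠ b := by
    rintro rfl
    rcases hb with h | h
    · exact ha.1 h
    · exact ha.2 h
  have hcol := col_spec φ hne
  rcases hg a b _ hcol with h | h | h
  · exfalso
    rcases hb with h2 | h2
    · exact ha.1 (h.trans h2)
    · exact ha.2 (h.trans h2)
  · rw [hcol, h]
  · exfalso
    rcases hr (edgeOf a b hne) with h2 | h2
    · exact ha.1 (h.trans h2)
    · exact ha.2 (h.trans h2)

lemma min'_congr {α : Type*} [LinearOrder α] (S S' : Finset α) (h : S.Nonempty)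
    (h' : S'.Nonempty) (heq : S = S') : S.min' h = S'.min' h' := by
  subst heq; rfl

lemma good_count {n k : ℕ} (φ : Edge n → Fin k) (x y : Fin k) (hxy : x ≠ y)
    (hr : ∀ e, φ e = x ∨ φ e = y) :
    ((univ : Finset (Fin n → Fin k)).filter (Good φ)).card ≤
      2 ^ n + k * ((univ : Finset (Finset (Fin n))).filter (ValidS φ)).card := by
  have hsplit := Finset.card_filter_add_card_filter_not
    (s := (univ : Finset (Fin n → Fin k)).filter (Good φ))
    (p := fun ψ => ∀ a, ψ a = x ∨ ψ a = y)
  have hA : ((((univ : Finset (Fin n → Fin k)).filter (Good φ))).filter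
      (fun ψ => ∀ a, ψ a = x ∨ ψ a = y)).card ≤ 2 ^ n := by
    have h1 : ((((univ : Finset (Fin n → Fin k)).filter (Good φ))).filter
        (fun ψ => ∀ a, ψ a = x ∨ ψ a = y)).card ≤ (univ : Finset (Fin n → Bool)).card := by
      apply card_le_card_of_injOn (fun ψ a => decide (ψ a = x))
      · intro ψ _
        exact mem_univ _
      · intro ψ1 hm1 ψ2 hm2 heq
        simp only [mem_coe, mem_filter] at hm1 hm2
        funext a
        have h := congrFun heq a
        have hiff := decide_eq_decide.mp h
        rcases hm1.2 a with h1 | h1 <;> rcases hm2.2 a with h2 | h2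
        · rw [h1, h2]
        · exact absurd (h2.symm.trans (hiff.mp h1)).symm hxy
        · exact absurd (h1.symm.trans (hiff.mpr h2)).symm hxy
        · rw [h1, h2]
    calc _ ≤ (univ : Finset (Fin n → Bool)).card := h1
      _ = 2 ^ n := by rw [card_univ, Fintype.card_fun]; simp
  have hB : ((((univ : Finset (Fin n → Fin k)).filter (Good φ))).filter
      (fun ψ => ¬∀ a, ψ a = x ∨ ψ a = y)).card ≤
      k * ((univ : Finset (Finset (Fin n))).filter (ValidS φ)).card := by
    have hle : ((((univ : Finset (Fin n → Fin k)).filter (Good φ))).filter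
        (fun ψ => ¬∀ a, ψ a = x ∨ ψ a = y)).card ≤
        ((univ : Finset (Fin k)) ×ˢ
          ((univ : Finset (Finset (Fin n))).filter (ValidS φ))).card := by
      apply card_le_card_of_injOn (fun ψ =>
        ((if h : ((univ : Finset (Fin n)).filter (fun a => ψ a ≠ x ∧ ψ a ≠ y)).Nonempty
          then ψ (((univ : Finset (Fin n)).filter (fun a => ψ a ≠ x ∧ ψ a ≠ y)).min' h)
          else x),
         (univ : Finset (Fin n)).filter (fun a => ψ a ≠ x ∧ ψ a ≠ y)))
      · intro ψ hψ
        simp only [mem_coe] at hψ ⊢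
        simp only [mem_filter, mem_univ, true_and] at hψ
        obtain ⟨hg, hnp⟩ := hψ
        push_neg at hnp
        obtain ⟨a, hax, hay⟩ := hnp
        have hneS : ((univ : Finset (Fin n)).filter
            (fun a => ψ a ≠ x ∧ ψ a ≠ y)).Nonempty :=
          ⟨a, by simp [hax, hay]⟩
        rw [mem_product]
        refine ⟨mem_univ _, ?_⟩
        rw [mem_filter]
        refine ⟨mem_univ _, hneS, ?_⟩
        intro a1 ha1 a2 ha2 b hb
        rw [mem_filter] at ha1 ha2
        have hbxy : ψ b = x ∨ ψ b = y := by
          by_contra hc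
          push_neg at hc
          exact hb (mem_filter.mpr ⟨mem_univ _, hc⟩)
        rw [good_off hr hg ha1.2 hbxy, good_off hr hg ha2.2 hbxy]
      · intro ψ1 hm1 ψ2 hm2 heq
        simp only [mem_coe, mem_filter, mem_univ, true_and] at hm1 hm2
        obtain ⟨hg1, hnp1⟩ := hm1
        obtain ⟨hg2, hnp2⟩ := hm2
        push_neg at hnp1 hnp2
        obtain ⟨a1, h1x, h1y⟩ := hnp1
        obtain ⟨a2, h2x, h2y⟩ := hnp2
        dsimp only at heq
        rw [Prod.mk.injEq] at heq
        obtain ⟨hc, hS⟩ := heq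
        set S1 := (univ : Finset (Fin n)).filter (fun a => ψ1 a ≠ x ∧ ψ1 a ≠ y) with hS1
        set S2 := (univ : Finset (Fin n)).filter (fun a => ψ2 a ≠ x ∧ ψ2 a ≠ y) with hS2
        have hne1 : S1.Nonempty := ⟨a1, by simp [hS1, h1x, h1y]⟩
        have hne2 : S2.Nonempty := ⟨a2, by simp [hS2, h2x, h2y]⟩
        rw [dif_pos hne1, dif_pos hne2] at hc
        have hmin : S1.min' hne1 = S2.min' hne2 := min'_congr _ _ _ _ hS
        have hmm1 := (mem_filter.mp (S1.min'_mem hne1)).2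
        have hmm2 := (mem_filter.mp (S2.min'_mem hne2)).2
        funext b
        by_cases hbS : b ∈ S1
        · have hb1 := (mem_filter.mp hbS).2
          have hbS2 : b ∈ S2 := hS ▸ hbS
          have hb2 := (mem_filter.mp hbS2).2
          calc ψ1 b = ψ1 (S1.min' hne1) := good_const hr hg1 hb1 hmm1
            _ = ψ2 (S2.min' hne2) := hc
            _ = ψ2 b := good_const hr hg2 hmm2 hb2
        · have hbS2 : b ∉ S2 := fun h => hbS (hS ▸ h)
          have hb1 : ψ1 b = x ∨ ψ1 b = y := by
            by_contra hcx
            push_neg at hcx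
            exact hbS (mem_filter.mpr ⟨mem_univ _, hcx⟩)
          have hb2 : ψ2 b = x ∨ ψ2 b = y := by
            by_contra hcx
            push_neg at hcx
            exact hbS2 (mem_filter.mpr ⟨mem_univ _, hcx⟩)
          have o1 := good_off hr hg1 hmm1 hb1
          have o2 := good_off hr hg2 hmm2 hb2
          rw [hmin] at o1
          exact Option.some_injective _ (o1.symm.trans o2)
    calc _ ≤ _ := hle
      _ = k * _ := by rw [card_product, card_univ, Fintype.card_fin]
  rw [← hsplit]
  exact Nat.add_le_add hA hB

def newcol {n k : ℕ} (φ' : Edge (n + 1) → Fin k) : Fin n → Fin k :=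
  fun a => φ' (edgeOf a.castSucc (Fin.last n) (Fin.castSucc_lt_last a).ne)

lemma good_newcol {n k : ℕ} (φ : Edge n → Fin k) (φ' : Edge (n + 1) → Fin k)
    (hG : IsGallai φ') (hE : Extends φ φ') : Good φ (newcol φ') := by
  intro a b i hi
  have hab : a ≠ b := col_ne_iff hi
  have hival : i = φ (edgeOf a b hab) := by
    have := (col_spec φ hab).symm.trans hi
    exact (Option.some_injective _ this).symm
  have hab' : a.castSucc ≠ b.castSucc := fun he => hab (Fin.castSucc_injective n he)
  have hbl : b.castSucc ≠ Fin.last n := (Fin.castSucc_lt_last b).ne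
  have hal : a.castSucc ≠ Fin.last n := (Fin.castSucc_lt_last a).ne
  have h3 := hG a.castSucc b.castSucc (Fin.last n) hab' hbl hal
  have he : φ' (edgeOf a.castSucc b.castSucc hab') = i := by
    rw [hival]; exact hE a b hab
  rw [he] at h3
  rcases h3 with h | h | h
  · right; left; exact h.symm
  · left; exact h.symm
  · right; right; exact h.symm

lemma ext_unique {n k : ℕ} {φ : Edge n → Fin k} {φ₁ φ₂ : Edge (n + 1) → Fin k}
    (h1 : Extends φ φ₁) (h2 : Extends φ φ₂) (h : newcol φ₁ = newcol φ₂) : φ₁ = φ₂ := by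
  funext e
  obtain ⟨q, hd⟩ := e
  induction q using Sym2.inductionOn with
  | hf u v =>
    have huv : u ≠ v := fun he => hd (by rw [he]; exact Sym2.mk_isDiag_iff.mpr rfl)
    rcases Fin.eq_castSucc_or_eq_last u with ⟨a, rfl⟩ | rfl <;>
      rcases Fin.eq_castSucc_or_eq_last v with ⟨b, rfl⟩ | rfl
    · have hab : a ≠ b := fun he => huv (by rw [he])
      exact (h1 a b hab).trans (h2 a b hab).symm
    · exact congrFun h a
    · have eq1 : (⟨s(Fin.last n, b.castSucc), hd⟩ : Edge (n + 1)) =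
        edgeOf b.castSucc (Fin.last n) (Fin.castSucc_lt_last b).ne := Subtype.ext Sym2.eq_swap
      rw [eq1]
      exact congrFun h b
    · exact absurd rfl huv

lemma extCount_le_good {n k : ℕ} (φ : Edge n → Fin k) :
    extCount φ ≤ (univ.filter (Good φ) : Finset (Fin n → Fin k)).card := by
  have hinj : Function.Injective
      (fun (p : {φ' : Edge (n + 1) → Fin k // IsGallai φ' ∧ Extends φ φ'}) =>
        (⟨newcol p.1, good_newcol φ p.1 p.2.1 p.2.2⟩ : {ψ : Fin n → Fin k // Good φ ψ})) := by
    intro p q hpq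
    exact Subtype.ext (ext_unique p.2.2 q.2.2 (congrArg Subtype.val hpq))
  calc extCount φ ≤ Nat.card {ψ : Fin n → Fin k // Good φ ψ} :=
        Nat.card_le_card_of_injective _ hinj
    _ = _ := by rw [Nat.card_eq_fintype_card, Fintype.card_subtype]


end GallaiAux


/-- A 2-coloring of `K_n` in which both colors are used more than `3mn` times has at
most `2^n + k·n·2^{n − 0.4m}` Gallai extensions. -/
theorem two_coloring_few_extensions (m n k : ℕ) (hm : 2 ≤ m) (hn : 2 ≤ n) (hk : 2 ≤ k)
    (φ : Edge n → Fin k) (h2 : (Set.range φ).ncard = 2)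
    (hmany : ∀ c ∈ Set.range φ, 3 * m * n < {e : Edge n | φ e = c}.ncard) :
    (extCount φ : ℝ) ≤ 2 ^ n + k * n * (2 : ℝ) ^ ((n : ℝ) - 0.4 * m) := by
  classical
  obtain ⟨x, y, hxy, hset⟩ := Set.ncard_eq_two.mp h2
  have hr : ∀ e, φ e = x ∨ φ e = y := by
    intro e
    have hme : φ e ∈ Set.range φ := Set.mem_range_self e
    rw [hset] at hme
    simpa using hme
  have hxmem : x ∈ Set.range φ := by rw [hset]; simp
  have hymem : y ∈ Set.range φ := by rw [hset]; simp
  have hcardconv : ∀ c : Fin k, {e : Edge n | φ e = c}.ncard =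
      ((univ : Finset (Edge n)).filter (fun e => φ e = c)).card := by
    intro c
    rw [show {e : Edge n | φ e = c} =
      (((univ : Finset (Edge n)).filter (fun e => φ e = c) : Finset (Edge n)) : Set (Edge n))
      by ext e; simp]
    exact Set.ncard_coe_finset _
  have hEx : 3 * m * n < ((univ : Finset (Edge n)).filter (fun e => φ e = x)).card := by
    have h := hmany x hxmem; rwa [hcardconv] at h
  have hEy : 3 * m * n < ((univ : Finset (Edge n)).filter (fun e => φ e = y)).card := by
    have h := hmany y hymem; rwa [hcardconv] at h
  -- n is large: both color classes fit among the n(n-1)/2 edges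
  have hdisj : Disjoint ((univ : Finset (Edge n)).filter (fun e => φ e = x))
      ((univ : Finset (Edge n)).filter (fun e => φ e = y)) := by
    rw [Finset.disjoint_left]
    intro e he1 he2
    rw [mem_filter] at he1 he2
    exact hxy (he1.2.symm.trans he2.2)
  have htot : ((univ : Finset (Edge n)).filter (fun e => φ e = x)).card +
      ((univ : Finset (Edge n)).filter (fun e => φ e = y)).card ≤ n.choose 2 := by
    calc _ = (((univ : Finset (Edge n)).filter (fun e => φ e = x)) ∪
        ((univ : Finset (Edge n)).filter (fun e => φ e = y))).card :=
          (card_union_of_disjoint hdisj).symm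
      _ ≤ (univ : Finset (Edge n)).card := card_le_card (subset_univ _)
      _ = Fintype.card (Edge n) := card_univ
      _ = (Fintype.card (Fin n)).choose 2 := Sym2.card_subtype_not_diag
      _ = n.choose 2 := by rw [Fintype.card_fin]
  have hn' : 12 * m + 2 ≤ n := by
    have h1 : 6 * m * n + 2 ≤ n.choose 2 := by nlinarith [hEx, hEy, htot]
    have h2 : (6 * m * n + 2) * 2 ≤ n * (n - 1) := by
      rw [Nat.choose_two_right] at h1
      calc (6 * m * n + 2) * 2 ≤ (n * (n - 1) / 2) * 2 := Nat.mul_le_mul_right 2 h1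
        _ ≤ n * (n - 1) := Nat.div_mul_le_self _ _
    obtain ⟨q, hq⟩ : ∃ q, n = q + 1 := ⟨n - 1, by omega⟩
    subst hq
    by_contra hcon
    push_neg at hcon
    have h3 : (q + 1) * q ≤ (q + 1) * (12 * m) := Nat.mul_le_mul_left _ (by omega)
    have h4 : (6 * m * (q + 1) + 2) * 2 ≤ (q + 1) * q := by
      calc (6 * m * (q + 1) + 2) * 2 ≤ (q + 1) * ((q + 1) - 1) := h2
        _ = (q + 1) * q := by simp
    nlinarith
  set u := (2 * m) / 5 with hu
  have h5u : 5 * u ≤ 2 * m := by omega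
  have hu4 : 2 * m ≤ 5 * u + 4 := by omega
  obtain ⟨e0⟩ : Nonempty (Edge n) :=
    ⟨edgeOf (⟨0, by omega⟩ : Fin n) (⟨1, by omega⟩ : Fin n)
      (by intro h; rw [Fin.ext_iff] at h; simpa using h)⟩
  have hkey := GallaiAux.key_degree φ x y hxy hr m u hm h5u hn' e0 hEx hEy
  have hvalid := GallaiAux.valid_count φ x y hxy u (by omega) hkey
  have hgood := GallaiAux.good_count φ x y hxy hr
  have hext := GallaiAux.extCount_le_good φ
  have hnat : extCount φ ≤ 2 ^ n + k * ((n + 1) * 2 ^ (n - (u + 1))) := by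
    calc extCount φ ≤ _ := hext
      _ ≤ 2 ^ n + k * ((univ : Finset (Finset (Fin n))).filter (GallaiAux.ValidS φ)).card :=
          hgood
      _ ≤ 2 ^ n + k * ((n + 1) * 2 ^ (n - (u + 1))) :=
          Nat.add_le_add_left (Nat.mul_le_mul_left k hvalid) _
  have ht_le_n : u + 1 ≤ n := by omega
  have h2pos : (0 : ℝ) < 2 := by norm_num
  have hpow : ((2 : ℝ)) ^ (n - (u + 1) : ℕ) = (2 : ℝ) ^ ((n : ℝ) - ((u : ℝ) + 1)) := by
    rw [← Real.rpow_natCast (2 : ℝ) (n - (u + 1))]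
    congr 1
    rw [Nat.cast_sub ht_le_n]
    push_cast
    ring
  have hexp : (0.4 : ℝ) * m + 0.2 ≤ ((u : ℝ) + 1) := by
    have hcast : ((2 * m : ℕ) : ℝ) ≤ ((5 * u + 4 : ℕ) : ℝ) := Nat.cast_le.mpr hu4
    push_cast at hcast
    norm_num
    linarith
  have h104 : (1.04 : ℝ) ≤ (2 : ℝ) ^ ((0.2 : ℝ)) := by
    have h5 : ((1.04 : ℝ)) ^ (5 : ℕ) ≤ ((2 : ℝ) ^ ((0.2 : ℝ))) ^ (5 : ℕ) := by
      rw [← Real.rpow_natCast ((2 : ℝ) ^ ((0.2 : ℝ))) 5, ← Real.rpow_mul (by norm_num)]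
      norm_num
    exact (pow_le_pow_iff_left₀ (by norm_num)
      (Real.rpow_nonneg (by norm_num) _) (by norm_num)).mp h5
  have hfrac : ((n : ℝ) + 1) ≤ (n : ℝ) * (2 : ℝ) ^ (((u : ℝ) + 1) - 0.4 * m) := by
    have h2' : (2 : ℝ) ^ ((0.2 : ℝ)) ≤ (2 : ℝ) ^ (((u : ℝ) + 1) - 0.4 * m) :=
      Real.rpow_le_rpow_of_exponent_le (by norm_num) (by linarith)
    have hn26 : (26 : ℝ) ≤ (n : ℝ) := by
      have : (26 : ℕ) ≤ n := by omega
      exact_mod_cast this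
    nlinarith
  have hR : (k : ℝ) * (((n : ℝ) + 1) * (2 : ℝ) ^ (n - (u + 1) : ℕ)) ≤
      (k : ℝ) * (n : ℝ) * (2 : ℝ) ^ ((n : ℝ) - 0.4 * m) := by
    calc (k : ℝ) * (((n : ℝ) + 1) * (2 : ℝ) ^ (n - (u + 1) : ℕ))
        ≤ (k : ℝ) * (((n : ℝ) * (2 : ℝ) ^ (((u : ℝ) + 1) - 0.4 * m)) *
            (2 : ℝ) ^ (n - (u + 1) : ℕ)) := by
          apply mul_le_mul_of_nonneg_left _ (by positivity)
          apply mul_le_mul_of_nonneg_right hfrac (by positivity)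
      _ = (k : ℝ) * (n : ℝ) * (2 : ℝ) ^ ((n : ℝ) - 0.4 * m) := by
          rw [hpow, mul_assoc ((n : ℝ)) ((2 : ℝ) ^ (((u : ℝ) + 1) - 0.4 * m)) _,
            ← Real.rpow_add h2pos,
            show (((u : ℝ) + 1) - 0.4 * m) + ((n : ℝ) - ((u : ℝ) + 1)) =
              (n : ℝ) - 0.4 * m by ring]
          ring
  calc (extCount φ : ℝ)
      ≤ ((2 ^ n + k * ((n + 1) * 2 ^ (n - (u + 1))) : ℕ) : ℝ) := by exact_mod_cast hnat
    _ = 2 ^ n + (k : ℝ) * (((n : ℝ) + 1) * (2 : ℝ) ^ (n - (u + 1) : ℕ)) := by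
        push_cast
        ring
    _ ≤ 2 ^ n + (k : ℝ) * (n : ℝ) * (2 : ℝ) ^ ((n : ℝ) - 0.4 * m) := by linarith
end

section
/- Let m, n, k ≥ 2 be integers and let φ be an edge coloring of K_n using exactly two colors from [k], in which each of the two colors appears on more than 3mn edges. Then the number of colorings of the n edges joining a new vertex to the vertices of K_n with colors from [k] that yield a Gallai coloring of K_{n+1} and that use at least one color not among the two colors of φ is at most k·n·2^{n − 0.4m}, where 2^{n−0.4m} denotes the real power of 2 with exponent n − 0.4m. -/
open Finset


def degSetX {n k : ℕ} (col : Fin n → Fin n → Fin k) (c : Fin k) (w : Fin n) :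
    Finset (Fin n) := univ.filter (fun v => v ≠ w ∧ col w v = c)

def degCX {n k : ℕ} (col : Fin n → Fin n → Fin k) (c : Fin k) (w : Fin n) : ℕ :=
  (degSetX col c w).card

lemma degCX_le {n k : ℕ} (col : Fin n → Fin n → Fin k) (c : Fin k) (w : Fin n) :
    degCX col c w ≤ n - 1 := by
  have h1 : degSetX col c w ⊆ univ.erase w := by
    intro v hv
    simp only [degSetX, mem_filter] at hv
    exact mem_erase.2 ⟨hv.2.1, mem_univ v⟩
  calc degCX col c w ≤ (univ.erase w).card := card_le_card h1
    _ = n - 1 := by rw [card_erase_of_mem (mem_univ w), card_univ, Fintype.card_fin]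

lemma degCX_add {n k : ℕ} (col : Fin n → Fin n → Fin k) (p q : Fin k)
    (hpq : p ≠ q) (hr : ∀ u v, u ≠ v → col u v = p ∨ col u v = q) (w : Fin n) :
    degCX col p w + degCX col q w = n - 1 := by
  have hd : Disjoint (degSetX col p w) (degSetX col q w) := by
    rw [Finset.disjoint_left]
    intro v hv1 hv2
    simp only [degSetX, mem_filter] at hv1 hv2
    exact hpq (hv1.2.2 ▸ hv2.2.2)
  have hu : degSetX col p w ∪ degSetX col q w = univ.erase w := by
    ext v
    simp only [degSetX, mem_union, mem_filter, mem_univ, true_and, mem_erase, and_true]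
    constructor
    · rintro (⟨h, _⟩ | ⟨h, _⟩) <;> exact h
    · intro h
      rcases hr w v (Ne.symm h) with hc | hc
      · exact Or.inl ⟨h, hc⟩
      · exact Or.inr ⟨h, hc⟩
  rw [degCX, degCX, ← card_union_of_disjoint hd, hu,
    card_erase_of_mem (mem_univ w), card_univ, Fintype.card_fin]

lemma sum_degCX_le {n k : ℕ} (col : Fin n → Fin n → Fin k) (c : Fin k) :
    ∑ w, degCX col c w ≤ n * (n - 1) := by
  calc ∑ w, degCX col c w ≤ ∑ _w : Fin n, (n-1) :=
        sum_le_sum (fun w _ => degCX_le col c w)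
    _ = n * (n-1) := by rw [sum_const, card_univ, Fintype.card_fin, smul_eq_mul]

lemma aux1 {n k m : ℕ} (col : Fin n → Fin n → Fin k) (p q : Fin k)
    (hpq : p ≠ q) (hs : ∀ u v, col u v = col v u)
    (hr : ∀ u v, u ≠ v → col u v = p ∨ col u v = q)
    (h6 : 6 * m * n < ∑ w, degCX col q w)
    (hy : (univ.filter (fun w => m ≤ degCX col p w ∧ m ≤ degCX col q w)).card < m)
    (hle : (univ.filter (fun w => degCX col p w < m)).card ≤
      (univ.filter (fun w => degCX col q w < m)).card) :
    False := by
  set X1 := univ.filter (fun w : Fin n => degCX col q w < m) with hX1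
  set X2 := univ.filter (fun w : Fin n => degCX col p w < m) with hX2
  set Y := univ.filter (fun w : Fin n => m ≤ degCX col p w ∧ m ≤ degCX col q w) with hY
  have h6m : 6 * m < n - 1 := by
    have hsum := sum_degCX_le col q
    have h1 : 6 * m * n < n * (n - 1) := lt_of_lt_of_le h6 hsum
    have h2 : n * (6 * m) < n * (n - 1) := by linarith [h1, Nat.mul_comm (6*m) n]
    exact lt_of_mul_lt_mul_left h2 (Nat.zero_le n)
  have hmn : m ≤ n := by omega
  -- disjointness of X1, X2
  have hdisj : Disjoint X1 X2 := by
    rw [Finset.disjoint_left]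
    intro w h1 h2
    simp only [hX1, hX2, mem_filter, mem_univ, true_and] at h1 h2
    have := degCX_add col p q hpq hr w
    omega
  have hne12 : ∀ u ∈ X1, ∀ v ∈ X2, u ≠ v := by
    intro u hu v hv h
    exact (Finset.disjoint_left.1 hdisj hu) (h ▸ hv)
  have hx1x2 : X1.card + X2.card ≤ n := by
    calc X1.card + X2.card = (X1 ∪ X2).card := (card_union_of_disjoint hdisj).symm
      _ ≤ Fintype.card (Fin n) := by rw [← card_univ]; exact card_le_card (subset_univ _)
      _ = n := Fintype.card_fin n
  -- sum over X1 of q-degrees is small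
  have hsumX1 : ∑ u ∈ X1, degCX col q u ≤ m * X1.card := by
    calc ∑ u ∈ X1, degCX col q u ≤ ∑ _u ∈ X1, m := by
          refine sum_le_sum fun u hu => ?_
          simp only [hX1, mem_filter] at hu
          exact le_of_lt hu.2
      _ = m * X1.card := by rw [sum_const, smul_eq_mul, Nat.mul_comm]
  -- cross bound
  have hcross : X1.card * X2.card ≤ m * X1.card + m * X2.card := by
    have step1 : X1.card * X2.card ≤
        (∑ u ∈ X1, degCX col q u) + ∑ v ∈ X2, degCX col p v := by
      have e1 : X1.card * X2.card = ∑ u ∈ X1, X2.card := by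
        rw [sum_const, smul_eq_mul]
      rw [e1]
      have e2 : ∀ u ∈ X1, X2.card = (X2.filter fun v => col u v = q).card +
          (X2.filter fun v => ¬ col u v = q).card :=
        fun u _ => (card_filter_add_card_filter_not _).symm
      rw [Finset.sum_congr rfl e2, Finset.sum_add_distrib]
      have b1 : ∀ u ∈ X1, (X2.filter fun v => col u v = q).card ≤ degCX col q u := by
        intro u hu
        refine card_le_card ?_
        intro v hv
        simp only [mem_filter] at hv
        simp only [degSetX, degCX, mem_filter, mem_univ, true_and]
        exact ⟨Ne.symm (hne12 u hu v hv.1), hv.2⟩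
      have b2 : ∑ u ∈ X1, (X2.filter fun v => ¬ col u v = q).card ≤
          ∑ v ∈ X2, degCX col p v := by
        have swap : ∑ u ∈ X1, (X2.filter fun v => ¬ col u v = q).card =
            ∑ v ∈ X2, (X1.filter fun u => ¬ col v u = q).card := by
          simp only [card_filter]
          rw [Finset.sum_comm]
          refine Finset.sum_congr rfl fun v hv => Finset.sum_congr rfl fun u hu => ?_
          rw [hs v u]
        rw [swap]
        refine sum_le_sum fun v hv => ?_
        refine card_le_card ?_
        intro u hu
        simp only [mem_filter] at hu
        simp only [degCX, degSetX, mem_filter, mem_univ, true_and]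
        have hvu : v ≠ u := Ne.symm (hne12 u hu.1 v hv)
        rcases hr v u hvu with hc | hc
        · exact ⟨Ne.symm hvu, hc⟩
        · exact absurd hc hu.2
      exact Nat.add_le_add (sum_le_sum b1) b2
    have hX2small : ∑ v ∈ X2, degCX col p v ≤ m * X2.card := by
      calc ∑ v ∈ X2, degCX col p v ≤ ∑ _v ∈ X2, m := by
            refine sum_le_sum fun v hv => ?_
            simp only [hX2, mem_filter] at hv
            exact le_of_lt hv.2
        _ = m * X2.card := by rw [sum_const, smul_eq_mul, Nat.mul_comm]
    exact le_trans step1 (Nat.add_le_add hsumX1 hX2small)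
  have hx2sq : X2.card * X2.card ≤ m * n := by
    calc X2.card * X2.card ≤ X1.card * X2.card := Nat.mul_le_mul_right _ hle
      _ ≤ m * X1.card + m * X2.card := hcross
      _ = m * (X1.card + X2.card) := by ring
      _ ≤ m * n := Nat.mul_le_mul_left m hx1x2
  -- the complement Z of X1
  set Z := univ \ X1 with hZ
  have hZsub : Z ⊆ X2 ∪ Y := by
    intro w hw
    simp only [hZ, mem_sdiff, hX1, mem_filter, mem_univ, true_and] at hw
    by_cases hp' : degCX col p w < m
    · exact mem_union_left _ (by simp [hX2, hp'])
    · exact mem_union_right _ (by simp [hY]; omega)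
  have hzcard : Z.card ≤ X2.card + m := by
    calc Z.card ≤ (X2 ∪ Y).card := card_le_card hZsub
      _ ≤ X2.card + Y.card := card_union_le _ _
      _ ≤ X2.card + m := by omega
  -- splitting the total sum
  have hsplit : (∑ u ∈ X1, degCX col q u) + ∑ w ∈ Z, degCX col q w = ∑ w, degCX col q w := by
    rw [Nat.add_comm]
    exact Finset.sum_sdiff (subset_univ X1)
  -- bound the sum over Z
  have hinZ : ∀ w ∈ Z, degCX col q w ≤
      (X1.filter fun v => v ≠ w ∧ col w v = q).card + Z.card := by
    intro w hw
    have hsplit2 : degSetX col q w ⊆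
        (X1.filter fun v => v ≠ w ∧ col w v = q) ∪ (Z.filter fun v => v ≠ w ∧ col w v = q) := by
      intro v hv
      simp only [degSetX, mem_filter, mem_univ, true_and] at hv
      by_cases h1 : v ∈ X1
      · exact mem_union_left _ (mem_filter.2 ⟨h1, hv⟩)
      · exact mem_union_right _ (mem_filter.2 ⟨by simp [hZ, h1], hv⟩)
    calc degCX col q w ≤ _ := card_le_card hsplit2
      _ ≤ (X1.filter fun v => v ≠ w ∧ col w v = q).card +
          (Z.filter fun v => v ≠ w ∧ col w v = q).card := card_union_le _ _
      _ ≤ (X1.filter fun v => v ≠ w ∧ col w v = q).card + Z.card := by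
          exact Nat.add_le_add_left (card_le_card (filter_subset _ _)) _
  have hswap2 : ∑ w ∈ Z, (X1.filter fun v => v ≠ w ∧ col w v = q).card =
      ∑ v ∈ X1, (Z.filter fun w => w ≠ v ∧ col v w = q).card := by
    simp only [card_filter]
    rw [Finset.sum_comm]
    refine Finset.sum_congr rfl fun v hv => Finset.sum_congr rfl fun w hw => ?_
    rw [hs v w]
    congr 1
    simp [ne_comm]
  have hZbound : ∑ w ∈ Z, degCX col q w ≤ m * X1.card + Z.card * Z.card := by
    calc ∑ w ∈ Z, degCX col q w
        ≤ ∑ w ∈ Z, ((X1.filter fun v => v ≠ w ∧ col w v = q).card + Z.card) :=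
          sum_le_sum hinZ
      _ = (∑ w ∈ Z, (X1.filter fun v => v ≠ w ∧ col w v = q).card) + Z.card * Z.card := by
          rw [Finset.sum_add_distrib, sum_const, smul_eq_mul]
      _ ≤ (∑ v ∈ X1, degCX col q v) + Z.card * Z.card := by
          rw [hswap2]
          refine Nat.add_le_add_right (sum_le_sum fun v hv => card_le_card ?_) _
          intro w hw
          simp only [mem_filter] at hw
          simp only [degCX, degSetX, mem_filter, mem_univ, true_and]
          exact hw.2
      _ ≤ m * X1.card + Z.card * Z.card := Nat.add_le_add_right hsumX1 _
  -- final arithmetic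
  have hzsq : Z.card * Z.card ≤ 2 * (m*n) + 2 * (m*m) := by
    have h1 : Z.card * Z.card ≤ (X2.card + m) * (X2.card + m) :=
      Nat.mul_le_mul hzcard hzcard
    have h2 : 2 * X2.card * m ≤ X2.card * X2.card + m * m := by
      nlinarith [sq_nonneg (X2.card - m), Nat.le_total X2.card m]
    nlinarith [hx2sq]
  have hx1n : X1.card ≤ n := by
    calc X1.card ≤ Fintype.card (Fin n) := by rw [← card_univ]; exact card_le_card (subset_univ _)
      _ = n := Fintype.card_fin n
  have htot : ∑ w, degCX col q w ≤ 6 * m * n := by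
    calc ∑ w, degCX col q w = (∑ u ∈ X1, degCX col q u) + ∑ w ∈ Z, degCX col q w := hsplit.symm
      _ ≤ m * X1.card + (m * X1.card + Z.card * Z.card) :=
          Nat.add_le_add hsumX1 hZbound
      _ ≤ m * n + (m * n + (2*(m*n) + 2*(m*m))) := by
          have := Nat.mul_le_mul_left m hx1n
          exact Nat.add_le_add this (Nat.add_le_add this hzsq)
      _ ≤ 6 * m * n := by nlinarith [Nat.mul_le_mul_left m hmn]
  omega

lemma degSetX_def {n k : ℕ} (col : Fin n → Fin n → Fin k) (c : Fin k) (w : Fin n) :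
  degSetX col c w = univ.filter (fun v => v ≠ w ∧ col w v = c) := rfl

lemma edge_repr {N : ℕ} (e : Edge N) : ∃ (x : Fin N) (y : Fin N) (h : x ≠ y), e = edgeOf x y h := by
  obtain ⟨s, hs⟩ := e
  induction s using Sym2.ind with
  | _ x y =>
    exact ⟨x, y, fun h => hs (Sym2.mk_isDiag_iff.2 h), rfl⟩

lemma edgeOf_symm {N : ℕ} (a b : Fin N) (h : a ≠ b) :
    edgeOf a b h = edgeOf b a h.symm := Subtype.ext (Sym2.eq_swap)

lemma sum_degCX_eq {n k : ℕ} (φ : Edge n → Fin k) (col : Fin n → Fin n → Fin k)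
    (hcol : ∀ u v (h : u ≠ v), col u v = φ (edgeOf u v h)) (c : Fin k) (e₀ : Edge n) :
    ∑ w, degCX col c w = 2 * (univ.filter fun e : Edge n => φ e = c).card := by
  classical
  set D := (univ ×ˢ univ).filter
      (fun uv : Fin n × Fin n => uv.2 ≠ uv.1 ∧ col uv.1 uv.2 = c) with hD
  have step1 : ∑ w, degCX col c w = D.card := by
    rw [hD, card_filter, Finset.sum_product]
    refine Finset.sum_congr rfl fun w _ => ?_
    rw [degCX, degSetX, card_filter]
  set Fc := univ.filter (fun e : Edge n => φ e = c) with hFc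
  set f : Fin n × Fin n → Edge n := fun uv =>
    if h : uv.2 = uv.1 then e₀ else edgeOf uv.1 uv.2 (fun hh => h hh.symm) with hf
  have hmap : ∀ uv ∈ D, f uv ∈ Fc := by
    rintro ⟨u, v⟩ huv
    simp only [hD, mem_filter] at huv
    obtain ⟨-, hne, hcc⟩ := huv
    simp only [hf, dif_neg hne, hFc, mem_filter, mem_univ, true_and]
    rw [← hcol u v (fun hh => hne hh.symm)]
    exact hcc
  have step2 : D.card = ∑ e ∈ Fc, (D.filter fun uv => f uv = e).card :=
    card_eq_sum_card_fiberwise hmap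
  have fiber : ∀ e ∈ Fc, (D.filter fun uv => f uv = e).card = 2 := by
    intro e he
    obtain ⟨x, y, hxy, rfl⟩ := edge_repr e
    have hcxy : col x y = c := by
      rw [hcol x y hxy]
      simpa [hFc] using he
    have : (D.filter fun uv => f uv = edgeOf x y hxy) = {(x, y), (y, x)} := by
      ext ⟨u, v⟩
      simp only [hD, mem_filter, mem_product, mem_univ, true_and, mem_insert,
        mem_singleton, Prod.mk.injEq]
      constructor
      · rintro ⟨⟨hne, hcc⟩, hfe⟩
        rw [hf] at hfe
        simp only [dif_neg hne] at hfe
        have := Subtype.ext_iff.1 hfe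
        simp only [edgeOf] at this
        rcases Sym2.eq_iff.1 this with ⟨h1, h2⟩ | ⟨h1, h2⟩
        · exact Or.inl ⟨h1, h2⟩
        · exact Or.inr ⟨h1, h2⟩
      · rintro (⟨rfl, rfl⟩ | ⟨rfl, rfl⟩)
        · have hne : v ≠ u := fun h => hxy h.symm
          refine ⟨⟨hne, hcxy⟩, ?_⟩
          simp only [hf, dif_neg hne]
        · have hcuv : col u v = c :=
            calc col u v = φ (edgeOf u v (fun h => hxy h.symm)) := hcol u v _
              _ = φ (edgeOf v u hxy) := congrArg φ (edgeOf_symm u v _)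
              _ = col v u := (hcol v u hxy).symm
              _ = c := hcxy
          refine ⟨⟨hxy, hcuv⟩, ?_⟩
          simp only [hf, dif_neg hxy]
          exact edgeOf_symm u v _
      -- end
    rw [this]
    rw [card_insert_of_notMem (by simp [Prod.ext_iff]; intro h; exact fun h2 => hxy (h.symm ▸ h2 ▸ rfl)), card_singleton]
  rw [step1, step2, Finset.sum_congr rfl fiber, sum_const, smul_eq_mul, Nat.mul_comm]

lemma ncard_eq_filter_card {n k : ℕ} (φ : Edge n → Fin k) (c : Fin k) :
    {e : Edge n | φ e = c}.ncard = (univ.filter fun e : Edge n => φ e = c).card := by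
  classical
  rw [Set.ncard_eq_toFinset_card', Set.toFinset_setOf]

lemma claim1 {n k m : ℕ} (col : Fin n → Fin n → Fin k) (p q : Fin k)
    (hpq : p ≠ q) (hs : ∀ u v, col u v = col v u)
    (hr : ∀ u v, u ≠ v → col u v = p ∨ col u v = q)
    (hp6 : 6 * m * n < ∑ w, degCX col p w)
    (hq6 : 6 * m * n < ∑ w, degCX col q w) :
    m ≤ (univ.filter (fun w : Fin n => m ≤ degCX col p w ∧ m ≤ degCX col q w)).card := by
  by_contra hy
  push_neg at hy
  rcases le_total ((univ.filter (fun w : Fin n => degCX col p w < m)).card)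
      ((univ.filter (fun w : Fin n => degCX col q w < m)).card) with h | h
  · exact aux1 col p q hpq hs hr hq6 hy h
  · refine aux1 col q p hpq.symm hs (fun u v huv => (hr u v huv).symm) hp6 ?_ h
    have : (univ.filter (fun w : Fin n => m ≤ degCX col q w ∧ m ≤ degCX col p w)) =
        (univ.filter (fun w : Fin n => m ≤ degCX col p w ∧ m ≤ degCX col q w)) := by
      apply filter_congr; intro w _; rw [and_comm]
    rwa [this]

def ModPX {n k : ℕ} (col : Fin n → Fin n → Fin k) (A : Finset (Fin n)) : Prop :=
  ∀ a ∈ A, ∀ a' ∈ A, ∀ b, b ∉ A → col a b = col a' b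

instance {n k : ℕ} (col : Fin n → Fin n → Fin k) (A : Finset (Fin n)) :
    Decidable (ModPX col A) := by unfold ModPX; infer_instance

lemma card_filter_superset {n : ℕ} (Y : Finset (Fin n)) :
    (univ.filter (fun A : Finset (Fin n) => Y ⊆ A)).card = 2 ^ (n - Y.card) := by
  have : (univ.filter (fun A : Finset (Fin n) => Y ⊆ A)).card = ((univ \ Y).powerset).card := by
    apply Finset.card_bij' (fun A _ => A \ Y) (fun S _ => S ∪ Y)
    · intro A hA
      simp only [mem_powerset]
      exact sdiff_subset_sdiff (subset_univ A) (Finset.Subset.refl Y)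
    · intro S hS
      simp only [mem_powerset] at hS
      simp only [mem_filter, mem_univ, true_and]
      exact subset_union_right
    · intro A hA
      simp only [mem_filter, mem_univ, true_and] at hA
      exact sdiff_union_of_subset hA
    · intro S hS
      simp only [mem_powerset] at hS
      rw [union_sdiff_right]
      refine sdiff_eq_self_of_disjoint ?_
      exact disjoint_of_subset_left hS sdiff_disjoint
  rw [this, card_powerset, card_sdiff_of_subset (subset_univ Y), card_univ, Fintype.card_fin]

lemma modcount {n k m : ℕ} (col : Fin n → Fin n → Fin k) (p q : Fin k)
    (hpq : p ≠ q) (hs : ∀ u v, col u v = col v u)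
    (hr : ∀ u v, u ≠ v → col u v = p ∨ col u v = q)
    (hmn : m < n)
    (hY : m ≤ (univ.filter (fun w : Fin n => m ≤ degCX col p w ∧ m ≤ degCX col q w)).card) :
    (univ.filter (fun A : Finset (Fin n) => A.Nonempty ∧ ModPX col A)).card ≤
      (n + 1) * 2 ^ (n - m) := by
  set Y := univ.filter (fun w : Fin n => m ≤ degCX col p w ∧ m ≤ degCX col q w) with hYdef
  have hcover : (univ.filter (fun A : Finset (Fin n) => A.Nonempty ∧ ModPX col A)) ⊆
      (univ.filter (fun A : Finset (Fin n) => Y ⊆ A)) ∪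
        Y.biUnion (fun w => (degSetX col p w).powerset ∪ (degSetX col q w).powerset) := by
    intro A hA
    simp only [mem_filter, mem_univ, true_and] at hA
    obtain ⟨hne, hmod⟩ := hA
    by_cases hYA : Y ⊆ A
    · exact mem_union_left _ (by simp [hYA])
    · rw [Finset.not_subset] at hYA
      obtain ⟨w, hwY, hwA⟩ := hYA
      obtain ⟨a₀, ha₀⟩ := hne
      have hwa : w ≠ a₀ := fun h => hwA (h ▸ ha₀)
      have hsubc : ∀ c, col w a₀ = c → A ⊆ degSetX col c w := by
        intro c hc a ha
        rw [degSetX_def]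
        simp only [mem_filter, mem_univ, true_and]
        refine ⟨fun h => hwA (h ▸ ha), ?_⟩
        rw [hs w a, hmod a ha a₀ ha₀ w hwA, ← hs w a₀, hc]
      refine mem_union_right _ (mem_biUnion.2 ⟨w, hwY, ?_⟩)
      rcases hr w a₀ hwa with hc | hc
      · exact mem_union_left _ (mem_powerset.2 (hsubc p hc))
      · exact mem_union_right _ (mem_powerset.2 (hsubc q hc))
  have hdeg : ∀ w ∈ Y, ∀ c ∈ ({p, q} : Finset (Fin k)),
      ((degSetX col c w).powerset).card ≤ 2 ^ (n - 1 - m) := by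
    intro w hw c hc
    simp only [hYdef, mem_filter, mem_univ, true_and] at hw
    have hadd := degCX_add col p q hpq hr w
    have hcard : (degSetX col c w).card ≤ n - 1 - m := by
      simp only [mem_insert, mem_singleton] at hc
      rcases hc with rfl | rfl
      · have : degCX col c w + m ≤ n - 1 := by unfold degCX at *; omega
        unfold degCX at this; omega
      · have : degCX col c w + m ≤ n - 1 := by unfold degCX at *; omega
        unfold degCX at this; omega
    rw [card_powerset]
    exact Nat.pow_le_pow_right (by norm_num) hcard
  calc (univ.filter (fun A : Finset (Fin n) => A.Nonempty ∧ ModPX col A)).card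
      ≤ ((univ.filter (fun A : Finset (Fin n) => Y ⊆ A)) ∪
        Y.biUnion (fun w => (degSetX col p w).powerset ∪ (degSetX col q w).powerset)).card :=
        card_le_card hcover
    _ ≤ (univ.filter (fun A : Finset (Fin n) => Y ⊆ A)).card +
        (Y.biUnion (fun w => (degSetX col p w).powerset ∪ (degSetX col q w).powerset)).card :=
        card_union_le _ _
    _ ≤ 2 ^ (n - m) + ∑ w ∈ Y, ((degSetX col p w).powerset ∪ (degSetX col q w).powerset).card := by
        refine Nat.add_le_add ?_ (card_biUnion_le)
        rw [card_filter_superset]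
        exact Nat.pow_le_pow_right (by norm_num) (Nat.sub_le_sub_left hY n)
    _ ≤ 2 ^ (n - m) + ∑ _w ∈ Y, 2 ^ (n - m) := by
        refine Nat.add_le_add_left (sum_le_sum fun w hw => ?_) _
        calc ((degSetX col p w).powerset ∪ (degSetX col q w).powerset).card
            ≤ ((degSetX col p w).powerset).card + ((degSetX col q w).powerset).card :=
              card_union_le _ _
          _ ≤ 2 ^ (n - 1 - m) + 2 ^ (n - 1 - m) :=
              Nat.add_le_add (hdeg w hw p (by simp)) (hdeg w hw q (by simp))
          _ = 2 ^ (n - 1 - m + 1) := by rw [pow_succ]; ring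
          _ ≤ 2 ^ (n - m) := Nat.pow_le_pow_right (by norm_num) (by omega)
    _ ≤ 2 ^ (n - m) + n * 2 ^ (n - m) := by
        rw [sum_const, smul_eq_mul]
        refine Nat.add_le_add_left (Nat.mul_le_mul_right _ ?_) _
        calc Y.card ≤ Fintype.card (Fin n) := by
              rw [← card_univ]; exact card_le_card (subset_univ _)
          _ = n := Fintype.card_fin n
    _ = (n + 1) * 2 ^ (n - m) := by ring

lemma chi_new {n k : ℕ} (φ : Edge n → Fin k) (φ' : Edge (n + 1) → Fin k)
    (hG : IsGallai φ') (hE : Extends φ φ') (a b : Fin n)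
    (ha : φ' (edgeOf a.castSucc (Fin.last n) (Fin.castSucc_lt_last a).ne) ∉ Set.range φ)
    (hb : φ' (edgeOf b.castSucc (Fin.last n) (Fin.castSucc_lt_last b).ne) ∉ Set.range φ) :
    φ' (edgeOf a.castSucc (Fin.last n) (Fin.castSucc_lt_last a).ne) =
      φ' (edgeOf b.castSucc (Fin.last n) (Fin.castSucc_lt_last b).ne) := by
  by_contra hne
  have hab : a ≠ b := by rintro rfl; exact hne rfl
  have tri := hG a.castSucc b.castSucc (Fin.last n)
    (fun he => hab (Fin.castSucc_injective n he))
    (Fin.castSucc_lt_last b).ne (Fin.castSucc_lt_last a).ne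
  rw [hE a b hab] at tri
  rcases tri with h1 | h2 | h3
  · exact hb ⟨edgeOf a b hab, h1⟩
  · exact hne h2.symm
  · exact ha ⟨edgeOf a b hab, h3⟩

lemma chi_forced {n k : ℕ} (φ : Edge n → Fin k) (φ' : Edge (n + 1) → Fin k)
    (hG : IsGallai φ') (hE : Extends φ φ') (a b : Fin n) (hab : a ≠ b)
    (ha : φ' (edgeOf a.castSucc (Fin.last n) (Fin.castSucc_lt_last a).ne) ∉ Set.range φ)
    (hb : φ' (edgeOf b.castSucc (Fin.last n) (Fin.castSucc_lt_last b).ne) ∈ Set.range φ) :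
    φ' (edgeOf b.castSucc (Fin.last n) (Fin.castSucc_lt_last b).ne) = φ (edgeOf a b hab) := by
  have tri := hG a.castSucc b.castSucc (Fin.last n)
    (fun he => hab (Fin.castSucc_injective n he))
    (Fin.castSucc_lt_last b).ne (Fin.castSucc_lt_last a).ne
  rw [hE a b hab] at tri
  rcases tri with h1 | h2 | h3
  · exact h1.symm
  · rw [h2] at hb
    exact absurd hb ha
  · exact absurd ⟨edgeOf a b hab, h3⟩ ha

/-- For a 2-coloring of `K_n` in which both colors are used more than `3mn` times, the
number of Gallai extensions in which some edge at the new vertex receives a color not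
used by `φ` is at most `k·n·2^{n − 0.4m}`. -/
theorem two_coloring_few_new_color_extensions (m n k : ℕ) (hm : 2 ≤ m) (hn : 2 ≤ n)
    (hk : 2 ≤ k) (φ : Edge n → Fin k) (h2 : (Set.range φ).ncard = 2)
    (hmany : ∀ c ∈ Set.range φ, 3 * m * n < {e : Edge n | φ e = c}.ncard) :
    (Nat.card {φ' : Edge (n + 1) → Fin k // IsGallai φ' ∧ Extends φ φ' ∧
        ∃ c : Fin k, c ∉ Set.range φ ∧ ∃ a : Fin n,
          φ' (edgeOf a.castSucc (Fin.last n) (Fin.castSucc_lt_last a).ne) = c} : ℝ) ≤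
      k * n * (2 : ℝ) ^ ((n : ℝ) - 0.4 * m) := by
  classical
  obtain ⟨p, q, hpq, hrange⟩ := Set.ncard_eq_two.mp h2
  set col : Fin n → Fin n → Fin k := fun u v => if h : u = v then p else φ (edgeOf u v h)
    with hcoldef
  have hcol : ∀ u v (h : u ≠ v), col u v = φ (edgeOf u v h) := by
    intro u v h
    simp only [hcoldef, dif_neg h]
  have hs : ∀ u v, col u v = col v u := by
    intro u v
    by_cases h : u = v
    · subst h; rfl
    · rw [hcol u v h, hcol v u (Ne.symm h)]
      exact congrArg φ (edgeOf_symm u v h)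
  have hr : ∀ u v, u ≠ v → col u v = p ∨ col u v = q := by
    intro u v h
    have hmem : col u v ∈ Set.range φ := ⟨edgeOf u v h, (hcol u v h).symm⟩
    rw [hrange] at hmem
    simpa using hmem
  have e0 : Edge n := edgeOf ⟨0, by omega⟩ ⟨1, by omega⟩ (Fin.ne_of_val_ne (by norm_num))
  have hp' : p ∈ Set.range φ := by rw [hrange]; exact Set.mem_insert _ _
  have hq' : q ∈ Set.range φ := by rw [hrange]; exact Set.mem_insert_of_mem _ rfl
  have hp6 : 6 * m * n < ∑ w, degCX col p w := by
    rw [sum_degCX_eq φ col hcol p e0]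
    have h1 := hmany p hp'
    rw [ncard_eq_filter_card] at h1
    linarith
  have hq6 : 6 * m * n < ∑ w, degCX col q w := by
    rw [sum_degCX_eq φ col hcol q e0]
    have h1 := hmany q hq'
    rw [ncard_eq_filter_card] at h1
    linarith
  have hmlt : m < n := by
    have h1 : 6 * m * n < n * (n - 1) := lt_of_lt_of_le hp6 (sum_degCX_le col p)
    have h2 : n * (6 * m) < n * (n - 1) := by
      calc n * (6 * m) = 6 * m * n := by ring
        _ < n * (n - 1) := h1
    have h3 : 6 * m < n - 1 := lt_of_mul_lt_mul_left h2 (Nat.zero_le n)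
    omega
  have hY := claim1 col p q hpq hs hr hp6 hq6
  have hmodcard := modcount col p q hpq hs hr hmlt hY
  set 𝓕 := univ.filter (fun A : Finset (Fin n) => A.Nonempty ∧ ModPX col A) with hF
  -- the injection
  have hcard : (Nat.card {φ' : Edge (n + 1) → Fin k // IsGallai φ' ∧ Extends φ φ' ∧
      ∃ c : Fin k, c ∉ Set.range φ ∧ ∃ a : Fin n,
        φ' (edgeOf a.castSucc (Fin.last n) (Fin.castSucc_lt_last a).ne) = c}) ≤
      k * 𝓕.card := by
    set T := {φ' : Edge (n + 1) → Fin k // IsGallai φ' ∧ Extends φ φ' ∧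
      ∃ c : Fin k, c ∉ Set.range φ ∧ ∃ a : Fin n,
        φ' (edgeOf a.castSucc (Fin.last n) (Fin.castSucc_lt_last a).ne) = c} with hT
    set χ : T → Fin n → Fin k :=
      fun t v => t.1 (edgeOf v.castSucc (Fin.last n) (Fin.castSucc_lt_last v).ne) with hχ
    set Af : T → Finset (Fin n) := fun t => univ.filter (fun v => χ t v ∉ Set.range φ)
      with hAf
    have hmemAf : ∀ (t : T) (v : Fin n), v ∈ Af t ↔ χ t v ∉ Set.range φ := by
      intro t v
      simp [hAf]
    have hAne : ∀ t : T, (Af t).Nonempty := by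
      rintro ⟨φ', hG', hE', c, hc, a, ha⟩
      refine ⟨a, (hmemAf _ a).2 ?_⟩
      simpa [hχ, ha] using hc
    have hKmod : ∀ t : T, Af t ∈ 𝓕 := by
      intro t
      obtain ⟨φ', hG', hE', hnew'⟩ := t
      rw [hF, mem_filter]
      refine ⟨mem_univ _, hAne _, ?_⟩
      intro a ha a' ha' b hb
      rw [hmemAf] at ha ha' hb
      rw [not_not] at hb
      have hab : a ≠ b := fun h => ha (h ▸ hb)
      have ha'b : a' ≠ b := fun h => ha' (h ▸ hb)
      rw [hcol a b hab, hcol a' b ha'b,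
        ← chi_forced φ φ' hG' hE' a b hab ha hb,
        ← chi_forced φ φ' hG' hE' a' b ha'b ha' hb]
    set f : T → Fin k × {A : Finset (Fin n) // A ∈ 𝓕} :=
      fun t => (χ t (hAne t).choose, ⟨Af t, hKmod t⟩) with hf
    have hinj : Function.Injective f := by
      intro t1 t2 heq
      obtain ⟨hfst, hsnd⟩ := Prod.ext_iff.1 heq
      have hAeq : Af t1 = Af t2 := Subtype.ext_iff.1 hsnd
      have ha01 : (hAne t1).choose ∈ Af t1 := (hAne t1).choose_spec
      have ha02 : (hAne t2).choose ∈ Af t2 := (hAne t2).choose_spec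
      have hNewEdge : ∀ v : Fin n, χ t1 v = χ t2 v := by
        intro v
        by_cases hv : v ∈ Af t1
        · calc χ t1 v = χ t1 (hAne t1).choose :=
                chi_new φ t1.1 t1.2.1 t1.2.2.1 v (hAne t1).choose
                  ((hmemAf t1 v).1 hv) ((hmemAf t1 _).1 ha01)
            _ = χ t2 (hAne t2).choose := hfst
            _ = χ t2 v :=
                chi_new φ t2.1 t2.2.1 t2.2.2.1 (hAne t2).choose v
                  ((hmemAf t2 _).1 ha02) ((hmemAf t2 v).1 (hAeq ▸ hv))
        · set a0 := (hAne t1).choose with ha0def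
          have ha0t2 : a0 ∈ Af t2 := hAeq ▸ ha01
          have hva : a0 ≠ v := fun h => hv (h ▸ ha01)
          have hv2 : v ∉ Af t2 := fun h => hv (hAeq ▸ h)
          have hr1 : χ t1 v ∈ Set.range φ := not_not.1 (fun h => hv ((hmemAf t1 v).2 h))
          have hr2 : χ t2 v ∈ Set.range φ := not_not.1 (fun h => hv2 ((hmemAf t2 v).2 h))
          calc χ t1 v = φ (edgeOf a0 v hva) :=
                chi_forced φ t1.1 t1.2.1 t1.2.2.1 a0 v hva ((hmemAf t1 _).1 ha01) hr1
            _ = χ t2 v :=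
                (chi_forced φ t2.1 t2.2.1 t2.2.2.1 a0 v hva ((hmemAf t2 _).1 ha0t2) hr2).symm
      apply Subtype.ext
      funext e
      obtain ⟨x, y, hxy, rfl⟩ := edge_repr e
      rcases Fin.eq_castSucc_or_eq_last x with ⟨x', rfl⟩ | rfl <;>
        rcases Fin.eq_castSucc_or_eq_last y with ⟨y', rfl⟩ | rfl
      · -- both old vertices
        have hx'y' : x' ≠ y' := fun h => hxy (by rw [h])
        exact (t1.2.2.1 x' y' hx'y').trans (t2.2.2.1 x' y' hx'y').symm
      · -- x old, y = last
        exact hNewEdge x'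
      · -- x = last, y old
        calc t1.1 (edgeOf (Fin.last n) y'.castSucc hxy)
            = t1.1 (edgeOf y'.castSucc (Fin.last n) hxy.symm) :=
              congrArg _ (edgeOf_symm _ _ _)
          _ = t2.1 (edgeOf y'.castSucc (Fin.last n) hxy.symm) := hNewEdge y'
          _ = t2.1 (edgeOf (Fin.last n) y'.castSucc hxy) :=
              (congrArg _ (edgeOf_symm _ _ _)).symm
      · exact absurd rfl hxy
    calc Nat.card T ≤ Nat.card (Fin k × {A : Finset (Fin n) // A ∈ 𝓕}) :=
          Nat.card_le_card_of_injective f hinj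
      _ = k * 𝓕.card := by
          rw [Nat.card_prod, Nat.card_eq_fintype_card, Nat.card_eq_fintype_card,
            Fintype.card_fin, Fintype.card_coe]
  have htotal : (Nat.card {φ' : Edge (n + 1) → Fin k // IsGallai φ' ∧ Extends φ φ' ∧
      ∃ c : Fin k, c ∉ Set.range φ ∧ ∃ a : Fin n,
        φ' (edgeOf a.castSucc (Fin.last n) (Fin.castSucc_lt_last a).ne) = c}) ≤
      k * ((n + 1) * 2 ^ (n - m)) :=
    le_trans hcard (Nat.mul_le_mul_left k hmodcard)
  -- final real arithmetic
  have hk0 : (0:ℝ) ≤ (k:ℝ) := by positivity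
  have hpow : ((2:ℕ) ^ (n - m) : ℝ) = (2:ℝ) ^ ((n:ℝ) - (m:ℝ)) := by
    rw [← Real.rpow_natCast ((2:ℕ):ℝ) (n - m), Nat.cast_sub hmlt.le]
    norm_num
  have hstep : ((n:ℝ) + 1) * (2:ℝ) ^ ((n:ℝ) - (m:ℝ)) ≤
      (n:ℝ) * (2:ℝ) ^ ((n:ℝ) - 0.4 * (m:ℝ)) := by
    have hn2 : (2:ℝ) ≤ (n:ℝ) := by exact_mod_cast hn
    have hm2 : (2:ℝ) ≤ (m:ℝ) := by exact_mod_cast hm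
    have h1 : ((n:ℝ) + 1) ≤ 2 * (n:ℝ) := by linarith
    have h2 : (2:ℝ) ^ ((n:ℝ) - (m:ℝ)) * 2 = (2:ℝ) ^ ((n:ℝ) - (m:ℝ) + 1) := by
      rw [Real.rpow_add_one (by norm_num : (2:ℝ) ≠ 0)]
    have h3 : (n:ℝ) - (m:ℝ) + 1 ≤ (n:ℝ) - 0.4 * (m:ℝ) := by nlinarith
    have h4 : (2:ℝ) ^ ((n:ℝ) - (m:ℝ) + 1) ≤ (2:ℝ) ^ ((n:ℝ) - 0.4 * (m:ℝ)) :=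
      Real.rpow_le_rpow_of_exponent_le (by norm_num) h3
    have h5 : (0:ℝ) < (2:ℝ) ^ ((n:ℝ) - (m:ℝ)) := Real.rpow_pos_of_pos (by norm_num) _
    calc ((n:ℝ) + 1) * (2:ℝ) ^ ((n:ℝ) - (m:ℝ)) ≤ 2 * (n:ℝ) * (2:ℝ) ^ ((n:ℝ) - (m:ℝ)) := by
          nlinarith
      _ = (n:ℝ) * ((2:ℝ) ^ ((n:ℝ) - (m:ℝ)) * 2) := by ring
      _ ≤ (n:ℝ) * (2:ℝ) ^ ((n:ℝ) - 0.4 * (m:ℝ)) := by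
          rw [h2]
          have hn0 : (0:ℝ) ≤ (n:ℝ) := by positivity
          exact mul_le_mul_of_nonneg_left h4 hn0
  calc (Nat.card {φ' : Edge (n + 1) → Fin k // IsGallai φ' ∧ Extends φ φ' ∧
      ∃ c : Fin k, c ∉ Set.range φ ∧ ∃ a : Fin n,
        φ' (edgeOf a.castSucc (Fin.last n) (Fin.castSucc_lt_last a).ne) = c} : ℝ)
      ≤ ((k * ((n + 1) * 2 ^ (n - m)) : ℕ) : ℝ) := by exact_mod_cast htotal
    _ = (k:ℝ) * (((n:ℝ) + 1) * (2:ℝ) ^ ((n:ℝ) - (m:ℝ))) := by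
        rw [← hpow]
        push_cast
        ring
    _ ≤ (k:ℝ) * ((n:ℝ) * (2:ℝ) ^ ((n:ℝ) - 0.4 * (m:ℝ))) :=
        mul_le_mul_of_nonneg_left hstep hk0
    _ = k * n * (2 : ℝ) ^ ((n : ℝ) - 0.4 * m) := by ring
end
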